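/- Let Ū ⊆ K̄ⁿ be a K̄-subspace of dimension d and let U ⊆ Kⁿ be a lift of Ū. A coordinate projection π : Kⁿ → K^d is an exhibition of Ū if and only if v(π(x)) = v(x) for all x ∈ U. In particular, if π is an exhibition of Ū, then the restriction of π to U is a K-linear isomorphism from U onto K^d. -/

import Mathlib

noncomputable section

open scoped Classical Pointwise

section Preamble

variable {K : Type*} [Field K] {Γ : Type*} [LinearOrderedCommGroupWithZero Γ]

instance (priority := 100) : OrderBot Γ where
  bot := 0
  bot_le _ := zero_le'

/-- The max-valuation on `K^n`: `v(a) = maxᵢ v(aᵢ)`. -/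
def vv (v : Valuation K Γ) {n : ℕ} (x : Fin n → K) : Γ :=
  Finset.univ.sup fun i => v (x i)

/-- `rvEq v x y` expresses `rv(x) = rv(y)` in `RV⁽ⁿ⁾ = Kⁿ/∼`, where
`x ∼ y` iff `v(x−y) < v(x)` or `x = y = 0`. -/
def rvEq (v : Valuation K Γ) {n : ℕ} (x y : Fin n → K) : Prop :=
  vv v (x - y) < vv v x ∨ (x = 0 ∧ y = 0)

/-- Balls in `K` (with `K` itself counting as a ball). -/
def IsBall1 (v : Valuation K Γ) (B : Set K) : Prop :=
  B = Set.univ ∨ ∃ a : K, ∃ γ : Γ, γ ≠ 0 ∧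
    (B = {x | v (x - a) < γ} ∨ B = {x | v (x - a) ≤ γ})

/-- Balls in `Kⁿ` (with `Kⁿ` itself counting as a ball). -/
def IsBall (v : Valuation K Γ) {n : ℕ} (B : Set (Fin n → K)) : Prop :=
  B = Set.univ ∨ ∃ a : Fin n → K, ∃ γ : Γ, γ ≠ 0 ∧
    (B = {x | vv v (x - a) < γ} ∨ B = {x | vv v (x - a) ≤ γ})

/-- Spherical completeness: every nonempty chain of balls in `K` has nonempty
intersection. -/
def SphericallyComplete (v : Valuation K Γ) : Prop :=
  ∀ C : Set (Set K), C.Nonempty → (∀ B ∈ C, IsBall1 v B) → IsChain (· ⊆ ·) C →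
    (⋂ B ∈ C, B).Nonempty

/-- The residue field `K̄` of the valuation ring `𝒪 = {x | v x ≤ 1}`. -/
def Kbar (v : Valuation K Γ) : Type _ :=
  IsLocalRing.ResidueField v.valuationSubring

instance (v : Valuation K Γ) : Field (Kbar v) :=
  inferInstanceAs (Field (IsLocalRing.ResidueField v.valuationSubring))

/-- The residue map `res : 𝒪 → K̄`, extended by the junk value `0` outside `𝒪`. -/
def res' (v : Valuation K Γ) (x : K) : Kbar v :=
  if h : v x ≤ 1 then IsLocalRing.residue v.valuationSubring ⟨x, h⟩ else 0

/-- The coordinatewise residue map on `Kⁿ`. -/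
def resv (v : Valuation K Γ) {n : ℕ} (x : Fin n → K) : Fin n → Kbar v :=
  fun i => res' v (x i)

/-- `res(S)` for a set `S ⊆ Kⁿ`: the set of residues of points of `S ∩ 𝒪ⁿ`. -/
def resSet (v : Valuation K Γ) {n : ℕ} (S : Set (Fin n → K)) : Set (Fin n → Kbar v) :=
  resv v '' {x ∈ S | ∀ i, v (x i) ≤ 1}

/-- `dir(x) = res(K·x) ⊆ K̄ⁿ`. -/
def dirSet (v : Valuation K Γ) {n : ℕ} (x : Fin n → K) : Set (Fin n → Kbar v) :=
  resSet v {y | ∃ c : K, y = c • x}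

/-- The coordinate projection `Kⁿ → K^d` selecting the coordinates `σ 0 < σ 1 < ⋯`. -/
def proj {A : Type*} {n d : ℕ} (σ : Fin d → Fin n) (x : Fin n → A) : Fin d → A :=
  fun k => x (σ k)

/-- `σ` (a strictly increasing selection of `d` of the `n` coordinates) is an
exhibition of the `K̄`-subspace `Ū ⊆ K̄ⁿ` if the corresponding coordinate projection
`K̄ⁿ → K̄^d` restricts to an isomorphism from `Ū` onto `K̄^d`. -/
def IsExhibition (v : Valuation K Γ) {n d : ℕ} (σ : Fin d → Fin n)
    (Ubar : Submodule (Kbar v) (Fin n → Kbar v)) : Prop :=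
  StrictMono σ ∧ Set.BijOn (proj σ) (Ubar : Set (Fin n → Kbar v)) Set.univ

/-- `affdir(C)`: the `K̄`-subspace of `K̄ⁿ` generated by all `dir(x − x')`, `x, x' ∈ C`. -/
def affdir (v : Valuation K Γ) {n : ℕ} (C : Set (Fin n → K)) :
    Submodule (Kbar v) (Fin n → Kbar v) :=
  Submodule.span (Kbar v) (⋃ x ∈ C, ⋃ x' ∈ C, dirSet v (x - x'))

/-- A matrix has entries in the valuation ring `𝒪`. -/
def EntriesInO (v : Valuation K Γ) {n : ℕ} (M : Matrix (Fin n) (Fin n) K) : Prop :=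
  ∀ i j, v (M i j) ≤ 1

/-- `M ∈ GLₙ(𝒪)`: `M` is invertible, with entries in `𝒪`, and its inverse also has
entries in `𝒪`. -/
def MemGLO (v : Valuation K Γ) {n : ℕ} (M : Matrix (Fin n) (Fin n) K) : Prop :=
  EntriesInO v M ∧ ∃ N : Matrix (Fin n) (Fin n) K,
    M * N = 1 ∧ N * M = 1 ∧ EntriesInO v N

/-- The entrywise residue matrix of `M`. -/
def resM (v : Valuation K Γ) {n : ℕ} (M : Matrix (Fin n) (Fin n) K) :
    Matrix (Fin n) (Fin n) (Kbar v) :=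
  fun i j => res' v (M i j)

/-- `DeltaLE v U W γ` expresses `Δ(U, W) ≤ γ`: for every `u ∈ U` there is `w ∈ W`
with `v(u − w) ≤ v(u)·γ`. -/
def DeltaLE (v : Valuation K Γ) {n : ℕ} (U W : Submodule K (Fin n → K)) (γ : Γ) : Prop :=
  ∀ u ∈ U, ∃ w ∈ W, vv v (u - w) ≤ vv v u * γ

/-- `IsDelta v U W γ` expresses `Δ(U, W) = γ`: `γ` is the minimum of all admissible
bounds. -/
def IsDelta (v : Valuation K Γ) {n : ℕ} (U W : Submodule K (Fin n → K)) (γ : Γ) : Prop :=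
  DeltaLE v U W γ ∧ ∀ δ : Γ, DeltaLE v U W δ → γ ≤ δ

end Preamble

variable {K : Type*} [Field K] {Γ : Type*} [LinearOrderedCommGroupWithZero Γ]

/-!
Dividing `x ∈ U` by an entry of maximal valuation puts it in `𝒪ⁿ` with `v(x) = 1`, and then
`v(π x) = v(x)` amounts to `π̄ (res x) ≠ 0`. So `π` preserves `v` on `U` exactly when `π̄` is
injective on `res(U) = Ū`, which, as `dim Ū = d`, means that it is bijective. For the last claim,
`π` is injective on `U` because it preserves `v`, and `dim U ≥ d` because lifts to `U` of a basis
of `Ū` stay linearly independent over `K`: a relation among them, normalised to have a coefficient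
of valuation `1`, would reduce to a nontrivial relation among the basis vectors.
-/

section Residue

variable (v : Valuation K Γ)

theorem vv_le_iff {n : ℕ} {x : Fin n → K} {γ : Γ} : vv v x ≤ γ ↔ ∀ i, v (x i) ≤ γ := by
  simp [vv]

theorem vv_lt_one_iff {n : ℕ} {x : Fin n → K} : vv v x < 1 ↔ ∀ i, v (x i) < 1 := by
  simp [vv, Finset.sup_lt_iff (bot_eq_zero (α := Γ) ▸ zero_lt_one : (⊥ : Γ) < 1)]

theorem le_vv {n : ℕ} (x : Fin n → K) (i : Fin n) : v (x i) ≤ vv v x :=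
  vv_le_iff v |>.1 le_rfl i

theorem vv_eq_zero_iff {n : ℕ} {x : Fin n → K} : vv v x = 0 ↔ x = 0 := by
  rw [← le_zero_iff, vv_le_iff]
  simp [funext_iff]

theorem res'_coe (a : v.valuationSubring) : res' v a = IsLocalRing.residue _ a :=
  dif_pos a.2

theorem res'_one : res' v 1 = 1 :=
  (res'_coe v 1).trans (map_one _)

theorem res'_coe_eq_zero_iff (a : v.valuationSubring) : res' v a = 0 ↔ v a < 1 := by
  rw [res'_coe]
  exact (IsLocalRing.residue_eq_zero_iff a).trans v.mem_maximalIdeal_iff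

theorem resv_eq_zero_iff {n : ℕ} {x : Fin n → K} (hx : ∀ i, v (x i) ≤ 1) :
    resv v x = 0 ↔ ∀ i, v (x i) < 1 := by
  lift x to Fin n → v.valuationSubring using hx
  exact funext_iff.trans (forall_congr' fun i => res'_coe_eq_zero_iff v (x i))

theorem resv_sum_smul {ι : Type*} [Fintype ι] {n : ℕ} (c : ι → K) (x : ι → Fin n → K)
    (hc : ∀ i, v (c i) ≤ 1) (hx : ∀ i j, v (x i j) ≤ 1) :
    resv v (∑ i, c i • x i) = ∑ i, res' v (c i) • resv v (x i) := by
  lift c to ι → v.valuationSubring using hc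
  lift x to ι → Fin n → v.valuationSubring using hx
  funext j
  have hsum : ∑ i, (c i : K) * x i j = ((∑ i, c i * x i j : v.valuationSubring) : K) := by
    simp
  simp only [resv, Finset.sum_apply, Pi.smul_apply, smul_eq_mul]
  simp only [hsum, res'_coe, map_sum, map_mul]
  rfl

theorem linearIndependent_of_linearIndependent_resv {ι : Type*} [Fintype ι] {n : ℕ}
    {x : ι → Fin n → K} (hx : ∀ i j, v (x i j) ≤ 1)
    (hres : LinearIndependent (Kbar v) fun i => resv v (x i)) : LinearIndependent K x := by
  rw [Fintype.linearIndependent_iff]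
  intro g hg
  by_contra! ⟨j, hj⟩
  obtain ⟨i₀, -, hmax⟩ := Finset.univ.exists_max_image (fun i => v (g i)) ⟨j, Finset.mem_univ j⟩
  have hg₀ : v (g i₀) ≠ 0 :=
    ((zero_lt_iff.2 (v.ne_zero_iff.2 hj)).trans_le (hmax j (Finset.mem_univ j))).ne'
  set c := fun i => (g i₀)⁻¹ * g i
  have hc : ∀ i, v (c i) ≤ 1 := fun i => by
    simpa [c, inv_mul_le_iff₀ (zero_lt_iff.2 hg₀)] using hmax i (Finset.mem_univ i)
  have hsum : ∑ i, c i • x i = 0 := by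
    simp only [c, mul_smul, ← Finset.smul_sum, hg, smul_zero]
  have hres₀ := Fintype.linearIndependent_iff.1 hres (fun i => res' v (c i))
    (by rw [← resv_sum_smul v c x hc hx, hsum, resv_eq_zero_iff v (by simp)]; simp) i₀
  rw [show c i₀ = 1 from inv_mul_cancel₀ (v.ne_zero_iff.1 hg₀), res'_one] at hres₀
  exact one_ne_zero hres₀

end Residue

section Exhibition

variable (v : Valuation K Γ) {n d : ℕ} {σ : Fin d → Fin n}

theorem finrank_le_finrank_of_resSet_eq {U : Submodule K (Fin n → K)}
    {Ubar : Submodule (Kbar v) (Fin n → Kbar v)}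
    (hlift : resSet v U = (Ubar : Set (Fin n → Kbar v))) :
    Module.finrank (Kbar v) Ubar ≤ Module.finrank K U := by
  let b := Module.finBasis (Kbar v) Ubar
  have hb : ∀ i, ∃ x, (x ∈ U ∧ ∀ j, v (x j) ≤ 1) ∧ resv v x = b i := fun i =>
    (Set.ext_iff.1 hlift _).2 (b i).2
  choose x hx hres using hb
  have hli : LinearIndependent K x := by
    refine linearIndependent_of_linearIndependent_resv v (fun i => (hx i).2) ?_
    rw [show (fun i => resv v (x i)) = Ubar.subtype ∘ b from funext hres]
    exact b.linearIndependent.map' _ Ubar.ker_subtype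
  have hliU := hli.of_comp (v := fun i => (⟨x i, (hx i).1⟩ : U)) U.subtype
  simpa using hliU.fintype_card_le_finrank

theorem vv_proj_eq_of_forall_proj_eq_zero {U : Submodule K (Fin n → K)}
    (hker : ∀ u ∈ resSet v U, proj σ u = 0 → u = 0) {x : Fin n → K} (hx : x ∈ U) :
    vv v (proj σ x) = vv v x := by
  refine le_antisymm ((vv_le_iff v).2 fun k => le_vv v x (σ k)) ?_
  obtain rfl | ⟨j, hj⟩ := (eq_or_ne x 0).imp id Function.ne_iff.1
  · simp [(vv_eq_zero_iff v).2]
  obtain ⟨i, -, hmax⟩ := Finset.univ.exists_max_image (fun i => v (x i)) ⟨j, Finset.mem_univ j⟩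
  have hxi : 0 < v (x i) :=
    (zero_lt_iff.2 (v.ne_zero_iff.2 hj)).trans_le (hmax j (Finset.mem_univ j))
  set y := (x i)⁻¹ • x
  have hy : ∀ j, v (y j) ≤ 1 := fun j => by
    simpa [y, inv_mul_le_iff₀ hxi] using hmax j (Finset.mem_univ j)
  have hres : resv v y ≠ 0 := by
    rw [ne_eq, resv_eq_zero_iff v hy, not_forall]
    exact ⟨i, by simp [y, v.ne_zero_iff.1 hxi.ne']⟩
  have hproj : ¬ ∀ k, v (y (σ k)) < 1 := fun h => hres (hker _ ⟨y, ⟨U.smul_mem _ hx, hy⟩, rfl⟩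
    ((resv_eq_zero_iff v fun k => hy (σ k)).2 h))
  obtain ⟨k, hk⟩ := not_forall.1 hproj
  calc vv v x = v (x i) :=
        le_antisymm ((vv_le_iff v).2 fun j => hmax j (Finset.mem_univ j)) (le_vv v x i)
    _ ≤ v (x (σ k)) := by simpa [y, le_inv_mul_iff₀ hxi] using not_lt.1 hk
    _ ≤ vv v (proj σ x) := le_vv v (proj σ x) k

theorem eq_zero_of_proj_eq_zero_of_forall_vv_proj_eq {S : Set (Fin n → K)}
    (hvv : ∀ x ∈ S, vv v (proj σ x) = vv v x) {u : Fin n → Kbar v} (hu : u ∈ resSet v S)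
    (hpu : proj σ u = 0) : u = 0 := by
  obtain ⟨x, ⟨hxS, hxO⟩, rfl⟩ := hu
  have hlt : vv v (proj σ x) < 1 :=
    (vv_lt_one_iff v).2 ((resv_eq_zero_iff v fun k => hxO (σ k)).1 hpu)
  rw [hvv x hxS, vv_lt_one_iff] at hlt
  exact (resv_eq_zero_iff v hxO).2 hlt

theorem forall_vv_proj_eq_iff_forall_proj_eq_zero {U : Submodule K (Fin n → K)} :
    (∀ x ∈ U, vv v (proj σ x) = vv v x) ↔ ∀ u ∈ resSet v U, proj σ u = 0 → u = 0 :=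
  ⟨fun h _ hu => eq_zero_of_proj_eq_zero_of_forall_vv_proj_eq v h hu,
    fun h _ hx => vv_proj_eq_of_forall_proj_eq_zero v h hx⟩

theorem isExhibition_iff (hσ : StrictMono σ) {Ubar : Submodule (Kbar v) (Fin n → Kbar v)}
    (hdim : Module.finrank (Kbar v) Ubar = d) :
    IsExhibition v σ Ubar ↔ ∀ u ∈ (Ubar : Set (Fin n → Kbar v)), proj σ u = 0 → u = 0 := by
  set f := (LinearMap.funLeft (Kbar v) (Kbar v) σ).domRestrict Ubar
  have hf :
      Function.Injective f ↔ ∀ u ∈ (Ubar : Set (Fin n → Kbar v)), proj σ u = 0 → u = 0 := by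
    rw [← LinearMap.ker_eq_bot, LinearMap.ker_eq_bot']
    exact ⟨fun h u hu hpu => congrArg Subtype.val (h ⟨u, hu⟩ hpu),
      fun h z hz => Subtype.ext (h z z.2 hz)⟩
  have hrank : Module.finrank (Kbar v) Ubar = Module.finrank (Kbar v) (Fin d → Kbar v) := by
    simp [hdim]
  rw [← hf, IsExhibition, and_iff_right hσ, Set.BijOn, and_iff_right (Set.mapsTo_univ _ _),
    Set.injOn_iff_injective, Set.surjOn_iff_surjective]
  exact ⟨And.left, fun h =>
    ⟨h, (LinearMap.injective_iff_surjective_of_finrank_eq_finrank hrank).1 h⟩⟩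

theorem bijective_funLeft_domRestrict_of_forall_vv_proj_eq {U : Submodule K (Fin n → K)}
    {Ubar : Submodule (Kbar v) (Fin n → Kbar v)}
    (hlift : resSet v U = (Ubar : Set (Fin n → Kbar v)))
    (hdim : Module.finrank (Kbar v) Ubar = d) (hvv : ∀ x ∈ U, vv v (proj σ x) = vv v x) :
    Function.Bijective ((LinearMap.funLeft K K σ).domRestrict U) := by
  set f := (LinearMap.funLeft K K σ).domRestrict U
  have hinj : Function.Injective f := by
    rw [← LinearMap.ker_eq_bot, LinearMap.ker_eq_bot']
    intro z hz
    have : vv v (z : Fin n → K) = 0 := by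
      rw [← hvv z z.2]
      exact (vv_eq_zero_iff v).2 hz
    exact Subtype.ext ((vv_eq_zero_iff v).1 this)
  have hrank : Module.finrank K U = Module.finrank K (Fin d → K) := by
    refine le_antisymm (LinearMap.finrank_le_finrank_of_injective hinj) ?_
    rw [Module.finrank_fin_fun, ← hdim]
    exact finrank_le_finrank_of_resSet_eq v hlift
  exact ⟨hinj, (LinearMap.injective_iff_surjective_of_finrank_eq_finrank hrank).1 hinj⟩

end Exhibition

/-- a coordinate projection `π` is an exhibition of `Ū` iff
`v(π x) = v(x)` for all `x` in a lift `U` of `Ū`; in that case `π` restricts to a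
`K`-linear isomorphism from `U` onto `K^d`. -/
theorem exhibition_iff_valuation_preserving
    (v : Valuation K Γ) {n d : ℕ}
    (Ubar : Submodule (Kbar v) (Fin n → Kbar v))
    (hdim : Module.finrank (Kbar v) Ubar = d)
    (U : Submodule K (Fin n → K))
    (hlift : resSet v (U : Set (Fin n → K)) = (Ubar : Set (Fin n → Kbar v)))
    (σ : Fin d → Fin n) (hσ : StrictMono σ) :
    (IsExhibition v σ Ubar ↔ ∀ x ∈ U, vv v (proj σ x) = vv v x) ∧
    (IsExhibition v σ Ubar →
      Function.Bijective ((LinearMap.funLeft K K σ).domRestrict U)) := by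
  have hiff : IsExhibition v σ Ubar ↔ ∀ x ∈ U, vv v (proj σ x) = vv v x := by
    rw [isExhibition_iff v hσ hdim, ← hlift, forall_vv_proj_eq_iff_forall_proj_eq_zero]
  exact ⟨hiff, fun hex =>
    bijective_funLeft_domRestrict_of_forall_vv_proj_eq v hlift hdim (hiff.1 hex)⟩

end
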